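/- arXiv:2309.02082 — 3 statements merged into one kernel-verified Lean document; each statement's English description precedes it below -/
import Mathlib

section
/- Let F : ℝ^d → ℝ be twice continuously differentiable and suppose there exist constants L, μ, K > 0 such that: (i) ‖∇F(x) − ∇F(y)‖ ≤ L‖x − y‖ for all x, y; (ii) ⟨x − y, ∇F(x) − ∇F(y)⟩ ≥ μ‖x − y‖² for all x, y; (iii) ⟨x − y, ∇∇F(x)∇F(x) − ∇∇F(y)∇F(y)⟩ ≥ K‖x − y‖² for all x, y, where ∇∇F denotes the Hessian. Let x⋆ satisfy ∇F(x⋆) = 0 and let h > 0. Then for every x ∈ ℝ^d, the drift term of the squared distance to x⋆ along the modified SDE satisfies −2⟨x − x⋆, ∇F(x)⟩ − h⟨x − x⋆, ∇∇F(x)∇F(x)⟩ + h(d − 1)‖∇F(x)‖² ≤ −α‖x − x⋆‖², where α = 2μ − h((d − 1)L² − K). -/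
open scoped RealInnerProductSpace

/-- Under the Lipschitz-gradient, strong-monotonicity and
Hessian-gradient monotonicity assumptions (with constants `L, μ, K > 0`), if
`∇F(x⋆) = 0` and `h > 0`, then the drift of the squared distance to `x⋆`
along the modified SDE for stochastic coordinate descent satisfies
`−2⟨x − x⋆, ∇F(x)⟩ − h⟨x − x⋆, ∇∇F(x)∇F(x)⟩ + h(d − 1)‖∇F(x)‖²
  ≤ −α ‖x − x⋆‖²` with `α = 2μ − h((d − 1)L² − K)`.
Here `∇F = gradient F` and `∇∇F(x) v = fderiv ℝ (gradient F) x v`. -/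
theorem scd_modified_sde_drift_bound
    (d : ℕ) (F : EuclideanSpace ℝ (Fin d) → ℝ) (hF : ContDiff ℝ 2 F)
    (L μ K h : ℝ) (hL : 0 < L) (hμ : 0 < μ) (hK : 0 < K) (hh : 0 < h)
    (hLip : ∀ x y : EuclideanSpace ℝ (Fin d),
      ‖gradient F x - gradient F y‖ ≤ L * ‖x - y‖)
    (hMono : ∀ x y : EuclideanSpace ℝ (Fin d),
      μ * ‖x - y‖ ^ 2 ≤ ⟪x - y, gradient F x - gradient F y⟫)
    (hHess : ∀ x y : EuclideanSpace ℝ (Fin d),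
      K * ‖x - y‖ ^ 2 ≤
        ⟪x - y, fderiv ℝ (gradient F) x (gradient F x)
                  - fderiv ℝ (gradient F) y (gradient F y)⟫)
    (xstar : EuclideanSpace ℝ (Fin d)) (hstar : gradient F xstar = 0) :
    ∀ x : EuclideanSpace ℝ (Fin d),
      -2 * ⟪x - xstar, gradient F x⟫
        - h * ⟪x - xstar, fderiv ℝ (gradient F) x (gradient F x)⟫
        + h * ((d : ℝ) - 1) * ‖gradient F x‖ ^ 2
      ≤ -(2 * μ - h * (((d : ℝ) - 1) * L ^ 2 - K)) * ‖x - xstar‖ ^ 2 := by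
  intro x
  set g := gradient F with hg
  have h1 : μ * ‖x - xstar‖ ^ 2 ≤ ⟪x - xstar, g x⟫ := by
    have := hMono x xstar
    rwa [hstar, sub_zero] at this
  have h2 : K * ‖x - xstar‖ ^ 2 ≤ ⟪x - xstar, fderiv ℝ g x (g x)⟫ := by
    have := hHess x xstar
    rwa [hstar, map_zero, sub_zero] at this
  have h3 : ((d : ℝ) - 1) * ‖g x‖ ^ 2 ≤ ((d : ℝ) - 1) * (L ^ 2 * ‖x - xstar‖ ^ 2) := by
    rcases Nat.eq_zero_or_pos d with hd | hd
    · subst hd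
      have hx0 : ‖g x‖ = 0 := by
        rw [norm_eq_zero]; exact Subsingleton.elim _ _
      have hx1 : ‖x - xstar‖ = 0 := by
        rw [norm_eq_zero]; exact Subsingleton.elim _ _
      simp [hx0, hx1]
    · have hd1 : (0 : ℝ) ≤ (d : ℝ) - 1 := by
        have : (1 : ℝ) ≤ (d : ℝ) := by exact_mod_cast hd
        linarith
      apply mul_le_mul_of_nonneg_left _ hd1
      have hn : ‖g x‖ ≤ L * ‖x - xstar‖ := by
        have := hLip x xstar
        rwa [hstar, sub_zero] at this
      calc ‖g x‖ ^ 2 ≤ (L * ‖x - xstar‖) ^ 2 := by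
            exact pow_le_pow_left₀ (norm_nonneg _) hn 2
        _ = L ^ 2 * ‖x - xstar‖ ^ 2 := by ring
  nlinarith [h1, h2, h3, hh.le]
end

section
/- Let F : ℝ^d → ℝ be twice continuously differentiable and suppose there exist constants μ, K > 0 such that ⟨x − y, ∇F(x) − ∇F(y)⟩ ≥ μ‖x − y‖² and ⟨x − y, ∇∇F(x)∇F(x) − ∇∇F(y)∇F(y)⟩ ≥ K‖x − y‖² for all x, y ∈ ℝ^d. Let x⋆ satisfy ∇F(x⋆) = 0, let h > 0, and let X : [0, ∞) → ℝ^d be a differentiable curve satisfying the modified gradient flow X'(t) = −∇F(X(t)) − (h/2)∇∇F(X(t))∇F(X(t)) for all t ≥ 0. Then for all t ≥ 0, ‖X(t) − x⋆‖² ≤ e^{−(2μ + hK)t} ‖X(0) − x⋆‖². -/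
open scoped RealInnerProductSpace

/-- Under strong monotonicity of `∇F` (constant `μ > 0`) and
monotonicity of `∇∇F ∇F` (constant `K > 0`), if `∇F(x⋆) = 0`, `h > 0`, and
`X : [0, ∞) → ℝ^d` solves the modified gradient flow
`X' = −∇F(X) − (h/2) ∇∇F(X) ∇F(X)`, then
`‖X(t) − x⋆‖² ≤ e^{−(2μ + hK) t} ‖X(0) − x⋆‖²` for all `t ≥ 0`.
Here `∇F = gradient F` and `∇∇F(x) v = fderiv ℝ (gradient F) x v`. -/
theorem modified_gradient_flow_exponential_contraction
    (d : ℕ) (F : EuclideanSpace ℝ (Fin d) → ℝ) (hF : ContDiff ℝ 2 F)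
    (μ K h : ℝ) (hμ : 0 < μ) (hK : 0 < K) (hh : 0 < h)
    (hMono : ∀ x y : EuclideanSpace ℝ (Fin d),
      μ * ‖x - y‖ ^ 2 ≤ ⟪x - y, gradient F x - gradient F y⟫)
    (hHess : ∀ x y : EuclideanSpace ℝ (Fin d),
      K * ‖x - y‖ ^ 2 ≤
        ⟪x - y, fderiv ℝ (gradient F) x (gradient F x)
                  - fderiv ℝ (gradient F) y (gradient F y)⟫)
    (xstar : EuclideanSpace ℝ (Fin d)) (hstar : gradient F xstar = 0)
    (X : ℝ → EuclideanSpace ℝ (Fin d))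
    (hX : ∀ t ∈ Set.Ici (0 : ℝ),
      HasDerivWithinAt X
        (-(gradient F (X t))
          - (h / 2) • fderiv ℝ (gradient F) (X t) (gradient F (X t)))
        (Set.Ici (0 : ℝ)) t) :
    ∀ t ∈ Set.Ici (0 : ℝ),
      ‖X t - xstar‖ ^ 2 ≤
        Real.exp (-(2 * μ + h * K) * t) * ‖X 0 - xstar‖ ^ 2 := by
  intro T hT
  rw [Set.mem_Ici] at hT
  set V : ℝ → EuclideanSpace ℝ (Fin d) := fun t =>
    -(gradient F (X t)) - (h / 2) • fderiv ℝ (gradient F) (X t) (gradient F (X t)) with hV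
  set f : ℝ → ℝ := fun t => ⟪X t - xstar, X t - xstar⟫ with hf
  -- derivative of f
  have hder0 : ∀ t ∈ Set.Ici (0 : ℝ),
      HasDerivWithinAt f (2 * ⟪X t - xstar, V t⟫) (Set.Ici (0 : ℝ)) t := by
    intro t ht
    have hg : HasDerivWithinAt (fun s => X s - xstar) (V t) (Set.Ici (0 : ℝ)) t :=
      (hX t ht).sub_const xstar
    have h2 := hg.inner ℝ hg
    have h3 : (2:ℝ) * ⟪X t - xstar, V t⟫ = ⟪X t - xstar, V t⟫ + ⟪V t, X t - xstar⟫ := by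
      rw [real_inner_comm (V t)]; ring
    rw [h3]
    exact h2
  -- the bound on the derivative
  have hbound : ∀ t, 2 * ⟪X t - xstar, V t⟫ ≤ -(2 * μ + h * K) * f t := by
    intro t
    have h1 := hMono (X t) xstar
    have h2 := hHess (X t) xstar
    rw [hstar, sub_zero] at h1
    rw [hstar, ContinuousLinearMap.map_zero, sub_zero] at h2
    have hVeq : ⟪X t - xstar, V t⟫ =
        -⟪X t - xstar, gradient F (X t)⟫
        - (h / 2) * ⟪X t - xstar, fderiv ℝ (gradient F) (X t) (gradient F (X t))⟫ := by
      simp only [hV, inner_sub_right, inner_neg_right, real_inner_smul_right]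
    have hfeq : f t = ‖X t - xstar‖ ^ 2 := real_inner_self_eq_norm_sq _
    rw [hVeq, hfeq]
    nlinarith [h1, h2]
  -- Gronwall
  have key := le_gronwallBound_of_liminf_deriv_right_le
    (f := f) (f' := fun t => 2 * ⟪X t - xstar, V t⟫)
    (δ := f 0) (K := -(2 * μ + h * K)) (ε := 0) (a := 0) (b := T)
    (ContinuousOn.mono (fun t ht => (hder0 t ht).continuousWithinAt) Set.Icc_subset_Ici_self)
    (fun t ht r hr => (((hder0 t (Set.mem_Ico.1 ht).1).mono
      (Set.Ici_subset_Ici.2 (Set.mem_Ico.1 ht).1)).liminf_right_slope_le hr))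
    le_rfl
    (fun t ht => by simpa using hbound t)
    T (Set.mem_Icc.2 ⟨hT, le_rfl⟩)
  rw [gronwallBound_ε0, sub_zero] at key
  have hf0 : f 0 = ‖X 0 - xstar‖ ^ 2 := real_inner_self_eq_norm_sq _
  have hfT : f T = ‖X T - xstar‖ ^ 2 := real_inner_self_eq_norm_sq _
  rw [hf0, hfT] at key
  linarith [key]
end

section
/- For h > 0, let M_h = [[−h/2, 1], [−1, h/2]] be the coefficient matrix of the modified equation of the symplectic Euler method for the harmonic oscillator in the variables (p, q), and let B_h = [[1 − h², h], [−h, 1]] be the matrix of one step of the symplectic Euler method, i.e., p_{n+1} = (1 − h²)p_n + h q_n, q_{n+1} = −h p_n + q_n. Then there exists a constant C > 0 such that for all h ∈ (0, 1], ‖exp(h M_h) − B_h‖ ≤ C h³, where exp denotes the matrix exponential. That is, symplectic Euler approximates the exact flow of its modified equation with local error O(h³). -/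
attribute [local instance]
  Matrix.linftyOpNormedRing Matrix.linftyOpNormedAlgebra

/-!
Since `M_h ^ 2 = (h ^ 2 / 4 - 1) • 1`, the degree-two Taylor polynomial `1 + A + A ^ 2 / 2` of
`exp A` at `A = h • M_h` is `B_h + (h ^ 4 / 8) • 1`. The Taylor remainder of the exponential in a
Banach algebra is at most `‖A‖ ^ 3 * exp ‖A‖`, and `‖A‖ ≤ 2 h`.
-/

open Finset Nat in
theorem NormedSpace.norm_exp_sub_sum_le_norm_pow_mul_exp {𝔸 : Type*} [NormedRing 𝔸]
    [NormedAlgebra ℝ 𝔸] [NormOneClass 𝔸] [CompleteSpace 𝔸] (x : 𝔸) (n : ℕ) :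
    ‖exp x - ∑ m ∈ range n, (m !⁻¹ : ℝ) • x ^ m‖ ≤ ‖x‖ ^ n * Real.exp ‖x‖ := by
  have tail : HasSum (fun m => ((m + n)!⁻¹ : ℝ) • x ^ (m + n))
      (exp x - ∑ m ∈ range n, (m !⁻¹ : ℝ) • x ^ m) :=
    (hasSum_nat_add_iff' n).mpr (exp_series_hasSum_exp' x)
  have majorant : HasSum (fun m => ‖x‖ ^ n * (‖x‖ ^ m / m !)) (‖x‖ ^ n * Real.exp ‖x‖) := by
    rw [Real.exp_eq_exp_ℝ]
    exact (expSeries_div_hasSum_exp ‖x‖).mul_left _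
  refine tail.norm_le_of_bounded majorant fun m => ?_
  calc ‖((m + n)!⁻¹ : ℝ) • x ^ (m + n)‖ ≤ ((m + n)!⁻¹ : ℝ) * ‖x‖ ^ (m + n) := by
        rw [norm_smul, Real.norm_of_nonneg (by positivity)]
        gcongr
        exact norm_pow_le x _
    _ ≤ (m !⁻¹ : ℝ) * ‖x‖ ^ (m + n) := by
        gcongr
        exact m.le_add_right n
    _ = ‖x‖ ^ n * (‖x‖ ^ m / m !) := by ring

section

attribute [local instance] Matrix.linftyOpSeminormedAddCommGroup

theorem Matrix.linfty_opNorm_le_of_forall_sum_le {m n α : Type*} [Fintype m] [Fintype n]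
    [SeminormedAddCommGroup α] {A : Matrix m n α} {r : ℝ} (hr : 0 ≤ r)
    (h : ∀ i, ∑ j, ‖A i j‖ ≤ r) : ‖A‖ ≤ r := by
  rw [linfty_opNorm_def, ← Real.coe_toNNReal r hr, NNReal.coe_le_coe]
  refine Finset.sup_le fun i _ => ?_
  rw [← NNReal.coe_le_coe, NNReal.coe_sum, Real.coe_toNNReal r hr]
  exact h i

end

noncomputable def modifiedEquationMatrix (h : ℝ) : Matrix (Fin 2) (Fin 2) ℝ :=
  !![-h / 2, 1; -1, h / 2]

def symplecticEulerMatrix (h : ℝ) : Matrix (Fin 2) (Fin 2) ℝ := !![1 - h ^ 2, h; -h, 1]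

theorem norm_modifiedEquationMatrix_le {h : ℝ} (h2 : |h| ≤ 2) :
    ‖modifiedEquationMatrix h‖ ≤ 2 := by
  refine Matrix.linfty_opNorm_le_of_forall_sum_le zero_le_two fun i => ?_
  fin_cases i <;> simp [modifiedEquationMatrix, abs_div] <;> linarith

theorem modifiedEquationMatrix_sq (h : ℝ) :
    modifiedEquationMatrix h ^ 2 = (h ^ 2 / 4 - 1) • 1 := by
  ext i j
  fin_cases i <;> fin_cases j <;> simp [modifiedEquationMatrix, sq] <;> ring

open Finset Nat in
theorem symplecticEulerMatrix_eq_expTaylor_sub (h : ℝ) :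
    symplecticEulerMatrix h =
      ∑ m ∈ range 3, (m !⁻¹ : ℝ) • (h • modifiedEquationMatrix h) ^ m - (h ^ 4 / 8) • 1 := by
  simp only [sum_range_succ, sum_range_zero, smul_pow, modifiedEquationMatrix_sq]
  ext i j
  fin_cases i <;> fin_cases j <;>
    simp [modifiedEquationMatrix, symplecticEulerMatrix, factorial] <;> ring

/-- For `h > 0` let `M_h = [[−h/2, 1], [−1, h/2]]` be the
coefficient matrix of the modified equation of the symplectic Euler method for
the harmonic oscillator, and let `B_h = [[1 − h², h], [−h, 1]]` be the matrix
of one step of the symplectic Euler method. Then there is a constant `C > 0`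
such that for all `h ∈ (0, 1]`, `‖exp(h M_h) − B_h‖ ≤ C h³`: symplectic Euler
approximates the exact flow of its modified equation with local error
`O(h³)`. -/
theorem symplectic_euler_approx_modified_flow_order_three :
    ∃ C : ℝ, 0 < C ∧ ∀ h ∈ Set.Ioc (0 : ℝ) 1,
      ‖NormedSpace.exp
          (h • (!![-h / 2, 1; -1, h / 2] : Matrix (Fin 2) (Fin 2) ℝ)) -
        (!![1 - h ^ 2, h; -h, 1] : Matrix (Fin 2) (Fin 2) ℝ)‖ ≤ C * h ^ 3 := by
  refine ⟨8 * Real.exp 2 + 1, by positivity, fun h ⟨h0, h1⟩ => ?_⟩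
  change ‖NormedSpace.exp (h • modifiedEquationMatrix h) - symplecticEulerMatrix h‖ ≤ _
  set A := h • modifiedEquationMatrix h
  have hA : ‖A‖ ≤ 2 * h := by
    rw [norm_smul, Real.norm_of_nonneg h0.le, mul_comm]
    gcongr
    exact norm_modifiedEquationMatrix_le (by rw [abs_of_pos h0]; linarith)
  set T := ∑ m ∈ Finset.range 3, (m.factorial⁻¹ : ℝ) • A ^ m
  have split : NormedSpace.exp A - symplecticEulerMatrix h
      = (NormedSpace.exp A - T) + (h ^ 4 / 8) • (1 : Matrix (Fin 2) (Fin 2) ℝ) := by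
    rw [symplecticEulerMatrix_eq_expTaylor_sub]; abel
  calc ‖NormedSpace.exp A - symplecticEulerMatrix h‖
      ≤ ‖NormedSpace.exp A - T‖ + ‖(h ^ 4 / 8) • (1 : Matrix (Fin 2) (Fin 2) ℝ)‖ :=
        split ▸ norm_add_le _ _
    _ ≤ ‖A‖ ^ 3 * Real.exp ‖A‖ + h ^ 4 / 8 := by
        gcongr
        · exact NormedSpace.norm_exp_sub_sum_le_norm_pow_mul_exp A 3
        · rw [norm_smul, norm_one, mul_one, Real.norm_of_nonneg (by positivity)]
    _ ≤ (2 * h) ^ 3 * Real.exp 2 + h ^ 3 := by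
        have : h ^ 4 ≤ h ^ 3 := pow_le_pow_of_le_one h0.le h1 (by norm_num)
        gcongr
        · linarith
        · linarith [pow_nonneg h0.le 4]
    _ = (8 * Real.exp 2 + 1) * h ^ 3 := by ring
end
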